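/- arXiv:1912.00365 — 9 statements merged into one kernel-verified Lean document; each statement's English description precedes it below -/
import Mathlib

section
/- Let k be a real number with 0 < k ≤ 1 and let α be a real number with α ≥ 1. Then for every real x with 0 ≤ x ≤ k, one has (1+x)^α ≥ 1 + (((1+k)^α − 1)/k^α) · x^α. -/
open Real

private lemma hasDerivAt_aux (α : ℝ) {t : ℝ} (ht : 0 < t) :
    HasDerivAt (fun t : ℝ => ((1 + t) ^ α - 1) * t ^ (-α))
      ((1 * α * (1 + t) ^ (α - 1)) * t ^ (-α) +
        ((1 + t) ^ α - 1) * (-α * t ^ (-α - 1))) t := by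
  have h1 : HasDerivAt (fun t : ℝ => (1 + t) ^ α - 1)
      (1 * α * (1 + t) ^ (α - 1)) t := by
    have : HasDerivAt (fun t : ℝ => 1 + t) 1 t := by
      simpa using (hasDerivAt_id t).const_add 1
    exact (this.rpow_const (Or.inl (by positivity))).sub_const 1
  have h2 : HasDerivAt (fun t : ℝ => t ^ (-α)) (-α * t ^ (-α - 1)) t :=
    Real.hasDerivAt_rpow_const (Or.inl ht.ne')
  exact h1.mul h2

private lemma key (α : ℝ) (hα : 1 ≤ α) {x k : ℝ} (hx : 0 < x) (hxk : x ≤ k) :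
    ((1 + k) ^ α - 1) * k ^ (-α) ≤ ((1 + x) ^ α - 1) * x ^ (-α) := by
  have hconv : Convex ℝ (Set.Icc x k) := convex_Icc x k
  have hmono : AntitoneOn (fun t : ℝ => ((1 + t) ^ α - 1) * t ^ (-α)) (Set.Icc x k) := by
    apply antitoneOn_of_deriv_nonpos hconv
    · intro t ht
      have ht0 : 0 < t := lt_of_lt_of_le hx ht.1
      exact ((hasDerivAt_aux α ht0).continuousAt).continuousWithinAt
    · intro t ht
      rw [interior_Icc] at ht
      have ht0 : 0 < t := lt_of_lt_of_le hx ht.1.le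
      exact (hasDerivAt_aux α ht0).differentiableAt.differentiableWithinAt
    · intro t ht
      rw [interior_Icc] at ht
      have ht0 : 0 < t := lt_of_lt_of_le hx ht.1.le
      rw [(hasDerivAt_aux α ht0).deriv]
      have h1t : (0:ℝ) < 1 + t := by linarith
      have hge : (1:ℝ) ≤ (1 + t) ^ (α - 1) :=
        Real.one_le_rpow (by linarith) (by linarith)
      have e1 : t ^ (-α) = t ^ (-α - 1) * t := by
        rw [← Real.rpow_add_one ht0.ne']; ring_nf
      have e2 : (1 + t) ^ α = (1 + t) ^ (α - 1) * (1 + t) := by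
        rw [← Real.rpow_add_one h1t.ne']; ring_nf
      rw [e1, e2]
      have hb : t ^ (-α - 1) ≥ 0 := Real.rpow_nonneg ht0.le _
      have hα0 : (0:ℝ) ≤ α := by linarith
      nlinarith [mul_nonneg hb hα0, mul_nonneg (mul_nonneg hb hα0) (sub_nonneg.2 hge)]
  have := hmono (Set.left_mem_Icc.2 hxk) (Set.right_mem_Icc.2 hxk) hxk
  simpa using this

theorem stmt_0 (k α x : ℝ) (hk0 : 0 < k) (hk1 : k ≤ 1) (hα : 1 ≤ α)
    (hx0 : 0 ≤ x) (hxk : x ≤ k) :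
    (1 + x) ^ α ≥ 1 + ((1 + k) ^ α - 1) / k ^ α * x ^ α := by
  rcases eq_or_lt_of_le hx0 with h | hx
  · subst h
    simp [Real.zero_rpow (by linarith : α ≠ 0)]
  · have hkey := key α hα hx hxk
    have hxα : (0:ℝ) < x ^ α := Real.rpow_pos_of_pos hx α
    have hkα : (0:ℝ) < k ^ α := Real.rpow_pos_of_pos hk0 α
    rw [Real.rpow_neg hk0.le, Real.rpow_neg hx.le] at hkey
    have h1 : ((1 + k) ^ α - 1) / k ^ α ≤ ((1 + x) ^ α - 1) / x ^ α := by
      rwa [div_eq_mul_inv, div_eq_mul_inv]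
    have h2 : ((1 + k) ^ α - 1) / k ^ α * x ^ α ≤ ((1 + x) ^ α - 1) / x ^ α * x ^ α :=
      mul_le_mul_of_nonneg_right h1 hxα.le
    rw [div_mul_cancel₀ _ hxα.ne'] at h2
    linarith
end

section
/- Let k be a real number with 0 < k ≤ 1 and let α be a real number with 0 ≤ α ≤ 1. Then for every real x with 0 ≤ x ≤ k, one has (1+x)^α ≤ 1 + (((1+k)^α − 1)/k^α) · x^α. -/
/-!
Since `x ≤ x (1 + k) ≤ k (1 + x)` and `x + k (1 + x) = x (1 + k) + k`, concavity of `t ↦ t ^ α`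
gives `x ^ α + k ^ α (1 + x) ^ α ≤ x ^ α (1 + k) ^ α + k ^ α`, which rearranges to the claim.
-/

theorem ConcaveOn.map_add_map_le_of_add_eq {𝕜 : Type*} [Field 𝕜] [LinearOrder 𝕜]
    [IsStrictOrderedRing 𝕜] {s : Set 𝕜} {f : 𝕜 → 𝕜} (hf : ConcaveOn 𝕜 s f) {a b c d : 𝕜}
    (ha : a ∈ s) (hb : b ∈ s) (hac : a ≤ c) (hcb : c ≤ b) (hsum : a + b = c + d) :
    f a + f b ≤ f c + f d := by
  rcases (hac.trans hcb).eq_or_lt with rfl | hab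
  · obtain rfl := le_antisymm hcb hac
    rw [add_left_cancel hsum]
  set t := (b - c) / (b - a)
  have hba : 0 < b - a := sub_pos.2 hab
  have ht0 : 0 ≤ t := div_nonneg (sub_nonneg.2 hcb) hba.le
  have ht1 : t ≤ 1 := (div_le_one hba).2 (by linarith)
  have hc : t * a + (1 - t) * b = c := by
    simp only [t]; field_simp; ring
  have hd : (1 - t) * a + t * b = d := by linear_combination hsum - hc
  have hfc := hf.2 ha hb ht0 (sub_nonneg.2 ht1) (add_sub_cancel t 1)
  have hfd := hf.2 ha hb (sub_nonneg.2 ht1) ht0 (sub_add_cancel 1 t)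
  simp only [smul_eq_mul, hc, hd] at hfc hfd
  linear_combination hfc + hfd

theorem stmt_1_general (k α x : ℝ) (hk0 : 0 < k) (hα0 : 0 ≤ α) (hα1 : α ≤ 1)
    (hx0 : 0 ≤ x) (hxk : x ≤ k) :
    (1 + x) ^ α ≤ 1 + ((1 + k) ^ α - 1) / k ^ α * x ^ α := by
  have key : x ^ α + (k * (1 + x)) ^ α ≤ (x * (1 + k)) ^ α + k ^ α :=
    (Real.concaveOn_rpow hα0 hα1).map_add_map_le_of_add_eq hx0 (Set.mem_Ici.2 (by positivity))
      (by nlinarith) (by nlinarith) (by ring)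
  rw [Real.mul_rpow hx0 (by linarith), Real.mul_rpow hk0.le (by linarith)] at key
  rw [div_mul_eq_mul_div, ← sub_le_iff_le_add', le_div_iff₀ (by positivity)]
  linear_combination key

theorem stmt_1 (k α x : ℝ) (hk0 : 0 < k) (hk1 : k ≤ 1) (hα0 : 0 ≤ α) (hα1 : α ≤ 1)
    (hx0 : 0 ≤ x) (hxk : x ≤ k) :
    (1 + x) ^ α ≤ 1 + ((1 + k) ^ α - 1) / k ^ α * x ^ α :=
  stmt_1_general k α x hk0 hα0 hα1 hx0 hxk
end

section
/- Let k be a real number with 0 < k ≤ 1 and let α be a real number with α < 0. Then for every real x with 0 < x ≤ k, one has (1+x)^α ≥ 1 + (((1+k)^α − 1)/k^α) · x^α. -/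
theorem stmt_2 (k α x : ℝ) (hk0 : 0 < k) (hk1 : k ≤ 1) (hα : α < 0)
    (hx0 : 0 < x) (hxk : x ≤ k) :
    (1 + x) ^ α ≥ 1 + ((1 + k) ^ α - 1) / k ^ α * x ^ α := by
  have hkpow : (0:ℝ) < k ^ α := Real.rpow_pos_of_pos hk0 α
  have h1 : (1 + k) ^ α ≤ 1 :=
    Real.rpow_le_one_of_one_le_of_nonpos (by linarith) hα.le
  have h2 : k ^ α ≤ x ^ α := Real.rpow_le_rpow_of_nonpos hx0 hxk hα.le
  have h3 : (1 + k) ^ α ≤ (1 + x) ^ α :=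
    Real.rpow_le_rpow_of_nonpos (by linarith) (by linarith) hα.le
  have hc : ((1 + k) ^ α - 1) / k ^ α ≤ 0 :=
    div_nonpos_of_nonpos_of_nonneg (by linarith) hkpow.le
  have h4 : ((1 + k) ^ α - 1) / k ^ α * x ^ α ≤ ((1 + k) ^ α - 1) / k ^ α * k ^ α :=
    mul_le_mul_of_nonpos_left h2 hc
  rw [div_mul_cancel₀ _ hkpow.ne'] at h4
  linarith
end

section
/- Let k and α be real numbers with 0 < k ≤ 1 and α ≥ 1, and set w = ((1+k)^α − 1)/k^α. Let a and b be real numbers with a > 0 and 0 ≤ b ≤ k·a. Then (a+b)^α ≥ a^α + w·b^α. -/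
/-!
Write `u = a / b` for `b > 0`. By homogeneity, `(a + b)^α - a^α = b^α ((u + 1)^α - u^α)`, and the
same identity with `a = 1`, `b = k` gives `w = (1/k + 1)^α - (1/k)^α`. For `α ≥ 1` the increments
`u ↦ (u + 1)^α - u^α` of the convex function `x ↦ x^α` are nondecreasing, and `b ≤ k a` says
exactly `u ≥ 1/k`.
-/

open Real Set

theorem monotoneOn_rpow_add_sub_rpow {c α : ℝ} (hc : 0 ≤ c) (hα : 1 ≤ α) :
    MonotoneOn (fun u : ℝ => (u + c) ^ α - u ^ α) (Ici 0) := by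
  have hderiv (u : ℝ) : HasDerivAt (fun u : ℝ => (u + c) ^ α - u ^ α)
      (α * (u + c) ^ (α - 1) - α * u ^ (α - 1)) u := by
    simpa using (((hasDerivAt_id' u).add_const c).rpow_const (Or.inr hα)).fun_sub
      (hasDerivAt_rpow_const (Or.inr hα))
  refine monotoneOn_of_deriv_nonneg (convex_Ici 0)
    (fun u _ => (hderiv u).continuousAt.continuousWithinAt)
    (fun u _ => (hderiv u).differentiableAt.differentiableWithinAt) fun u hu => ?_
  rw [interior_Ici] at hu
  have hpow : u ^ (α - 1) ≤ (u + c) ^ (α - 1) :=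
    rpow_le_rpow (le_of_lt hu) (le_add_of_nonneg_right hc) (by linarith)
  rw [(hderiv u).deriv, sub_nonneg]
  exact mul_le_mul_of_nonneg_left hpow (by linarith)

theorem rpow_add_sub_rpow_eq_mul {a b : ℝ} (α : ℝ) (ha : 0 ≤ a) (hb : 0 < b) :
    (a + b) ^ α - a ^ α = b ^ α * ((a / b + 1) ^ α - (a / b) ^ α) := by
  have hab : 0 ≤ a / b := div_nonneg ha hb.le
  rw [mul_sub, ← mul_rpow hb.le (by positivity), ← mul_rpow hb.le hab, mul_add,
    mul_div_cancel₀ a hb.ne', mul_one]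

theorem stmt_6_general (k α a b : ℝ) (hk0 : 0 < k) (hα : 1 ≤ α)
    (hb0 : 0 ≤ b) (hbk : b ≤ k * a) :
    (a + b) ^ α ≥ a ^ α + ((1 + k) ^ α - 1) / k ^ α * b ^ α := by
  rcases hb0.eq_or_lt with rfl | hb
  · simp [zero_rpow (by linarith : α ≠ 0)]
  have hka : 1 / k ≤ a / b := by
    rw [div_le_div_iff₀ hk0 hb]
    linarith
  have ha : 0 ≤ a := (pos_of_mul_pos_right (hb.trans_le hbk) hk0.le).le
  have hw : ((1 + k) ^ α - 1) / k ^ α = (1 / k + 1) ^ α - (1 / k) ^ α := by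
    have h := rpow_add_sub_rpow_eq_mul α zero_le_one hk0
    rw [one_rpow] at h
    rw [h, mul_div_cancel_left₀ _ (rpow_pos_of_pos hk0 α).ne']
  have hincr : (1 / k + 1) ^ α - (1 / k) ^ α ≤ (a / b + 1) ^ α - (a / b) ^ α :=
    monotoneOn_rpow_add_sub_rpow zero_le_one hα (by simp [hk0.le])
      (by simp [div_nonneg ha hb.le]) hka
  calc a ^ α + ((1 + k) ^ α - 1) / k ^ α * b ^ α
      ≤ a ^ α + b ^ α * ((a / b + 1) ^ α - (a / b) ^ α) := by
        rw [hw, mul_comm]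
        gcongr
    _ = (a + b) ^ α := by rw [← rpow_add_sub_rpow_eq_mul α ha hb, add_sub_cancel]

theorem stmt_6 (k α a b : ℝ) (hk0 : 0 < k) (hk1 : k ≤ 1) (hα : 1 ≤ α)
    (ha : 0 < a) (hb0 : 0 ≤ b) (hbk : b ≤ k * a) :
    (a + b) ^ α ≥ a ^ α + ((1 + k) ^ α - 1) / k ^ α * b ^ α :=
  stmt_6_general k α a b hk0 hα hb0 hbk
end

section
/- Let k and α be real numbers with 0 < k ≤ 1 and 0 ≤ α ≤ 1, and set w = ((1+k)^α − 1)/k^α. Let a and b be real numbers with a > 0 and 0 ≤ b ≤ k·a. Then (a+b)^α ≤ a^α + w·b^α. -/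
/-!
Divide by `b ^ α`: with `g s = (s + 1) ^ α - s ^ α` one has `(a + b) ^ α - a ^ α = b ^ α * g (a / b)`
and `((1 + k) ^ α - 1) / k ^ α = g (1 / k)`. Since `x ↦ x ^ α` is concave, its increments over
intervals of length one decrease, so `g` is antitone, and `b ≤ k * a` means `1 / k ≤ a / b`.
-/

open Real Set

theorem ConcaveOn.map_add_sub_map_le_of_le {𝕜 : Type*} [Field 𝕜] [LinearOrder 𝕜]
    [IsStrictOrderedRing 𝕜] {s : Set 𝕜} {f : 𝕜 → 𝕜} (hf : ConcaveOn 𝕜 s f) {x y h : 𝕜}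
    (hx : x ∈ s) (hyh : y + h ∈ s) (hxy : x ≤ y) (hh : 0 ≤ h) :
    f (y + h) - f y ≤ f (x + h) - f x := by
  rcases hh.eq_or_lt with rfl | hh
  · simp
  rcases hxy.eq_or_lt with rfl | hxy
  · rfl
  have hmem : ∀ z, x ≤ z → z ≤ y + h → z ∈ s := fun z h₁ h₂ ↦
    hf.1.ordConnected.out hx hyh ⟨h₁, h₂⟩
  have hslope : slope f y (y + h) ≤ slope f x (x + h) := calc
    slope f y (y + h) = slope f (y + h) y := slope_comm _ _ _
    _ ≤ slope f (y + h) x :=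
      hf.slope_anti hyh ⟨hx, (by linarith : x ≠ y + h)⟩
        ⟨hmem y hxy.le (by linarith), (by linarith : y ≠ y + h)⟩ hxy.le
    _ = slope f x (y + h) := slope_comm _ _ _
    _ ≤ slope f x (x + h) :=
      hf.slope_anti hx ⟨hmem (x + h) (by linarith) (by linarith), (by linarith : x + h ≠ x)⟩
        ⟨hyh, (by linarith : y + h ≠ x)⟩ (by linarith)
  simpa [slope_def_field, div_le_div_iff_of_pos_right hh] using hslope

theorem antitoneOn_rpow_add_one_sub_rpow {α : ℝ} (hα₀ : 0 ≤ α) (hα₁ : α ≤ 1) :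
    AntitoneOn (fun s : ℝ ↦ (s + 1) ^ α - s ^ α) (Ici 0) := fun _ hx _ hy hxy ↦
  (concaveOn_rpow hα₀ hα₁).map_add_sub_map_le_of_le hx (mem_Ici.2 (add_nonneg hy zero_le_one))
    hxy zero_le_one

theorem add_rpow_sub_rpow_eq_mul {a b : ℝ} (ha : 0 ≤ a) (hb : 0 < b) (α : ℝ) :
    (a + b) ^ α - a ^ α = b ^ α * ((a / b + 1) ^ α - (a / b) ^ α) := by
  rw [mul_sub, ← mul_rpow hb.le (by positivity), ← mul_rpow hb.le (by positivity)]
  field_simp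

theorem stmt_7_general (k α a b : ℝ) (hk0 : 0 < k) (hα0 : 0 ≤ α) (hα1 : α ≤ 1)
    (ha : 0 < a) (hb0 : 0 ≤ b) (hbk : b ≤ k * a) :
    (a + b) ^ α ≤ a ^ α + ((1 + k) ^ α - 1) / k ^ α * b ^ α := by
  rcases hb0.eq_or_lt with rfl | hb
  · have hw : 0 ≤ ((1 + k) ^ α - 1) / k ^ α :=
      div_nonneg (sub_nonneg.2 (one_le_rpow (by linarith) hα0)) (by positivity)
    simpa using mul_nonneg hw (zero_rpow_nonneg α)
  set g : ℝ → ℝ := fun s ↦ (s + 1) ^ α - s ^ α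
  have hw : ((1 + k) ^ α - 1) / k ^ α = g (1 / k) := by
    rw [div_eq_iff (by positivity), mul_comm, ← add_rpow_sub_rpow_eq_mul zero_le_one hk0,
      one_rpow]
  have hs : 1 / k ≤ a / b := by
    rw [div_le_div_iff₀ hk0 hb]
    linarith
  have hg : g (a / b) ≤ g (1 / k) :=
    antitoneOn_rpow_add_one_sub_rpow hα0 hα1 (mem_Ici.2 (by positivity))
    (mem_Ici.2 (by positivity)) hs
  calc (a + b) ^ α = a ^ α + b ^ α * g (a / b) := by
        rw [← add_rpow_sub_rpow_eq_mul ha.le hb]; ring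
    _ ≤ a ^ α + b ^ α * g (1 / k) := by gcongr
    _ = a ^ α + ((1 + k) ^ α - 1) / k ^ α * b ^ α := by rw [hw, mul_comm]

theorem stmt_7 (k α a b : ℝ) (hk0 : 0 < k) (hk1 : k ≤ 1) (hα0 : 0 ≤ α) (hα1 : α ≤ 1)
    (ha : 0 < a) (hb0 : 0 ≤ b) (hbk : b ≤ k * a) :
    (a + b) ^ α ≤ a ^ α + ((1 + k) ^ α - 1) / k ^ α * b ^ α :=
  stmt_7_general k α a b hk0 hα0 hα1 ha hb0 hbk
end

section
/- Let k and α be real numbers with 0 < k ≤ 1 and α < 0, and set w = ((1+k)^α − 1)/k^α. Let a, b, c be real numbers with a > 0, 0 < b ≤ k·a, and 0 < c ≤ a + b. Then c^α ≥ a^α + w·b^α. -/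
theorem stmt_8 (k α a b c : ℝ) (hk0 : 0 < k) (hk1 : k ≤ 1) (hα : α < 0)
    (ha : 0 < a) (hb0 : 0 < b) (hbk : b ≤ k * a) (hc0 : 0 < c) (hcab : c ≤ a + b) :
    c ^ α ≥ a ^ α + ((1 + k) ^ α - 1) / k ^ α * b ^ α := by
  have hbk' : b / k ≤ a := (div_le_iff₀' hk0).mpr hbk
  have hbkpos : 0 < b / k := div_pos hb0 hk0
  have h1 : a ^ α ≤ (b / k) ^ α :=
    Real.rpow_le_rpow_of_nonpos hbkpos hbk' hα.le
  have hneg : (1 + k) ^ α - 1 < 0 := by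
    have : (1 + k) ^ α < 1 :=
      Real.rpow_lt_one_of_one_lt_of_neg (by linarith) hα
    linarith
  have hdiv : ((1 + k) ^ α - 1) / k ^ α * b ^ α = ((1 + k) ^ α - 1) * (b / k) ^ α := by
    rw [Real.div_rpow hb0.le hk0.le]; ring
  rw [hdiv]
  have h2 : ((1 + k) ^ α - 1) * (b / k) ^ α ≤ ((1 + k) ^ α - 1) * a ^ α :=
    mul_le_mul_of_nonpos_left h1 hneg.le
  have h3 : a ^ α + ((1 + k) ^ α - 1) * a ^ α = ((1 + k) * a) ^ α := by
    rw [Real.mul_rpow (by linarith) ha.le]; ring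
  have h4 : ((1 + k) * a) ^ α ≤ (a + b) ^ α :=
    Real.rpow_le_rpow_of_nonpos (by linarith) (by nlinarith) hα.le
  have h5 : (a + b) ^ α ≤ c ^ α :=
    Real.rpow_le_rpow_of_nonpos hc0 hcab hα.le
  linarith
end

section
/- Let k and α be real numbers with 0 < k ≤ 1 and α ≥ 1, let N ≥ 1 be a natural number, and let a_0, a_1, …, a_{N−1} be nonnegative real numbers satisfying k·a_i ≥ ∑_{j=i+1}^{N−1} a_j for every i = 0, 1, …, N−2. Setting w = ((1+k)^α − 1)/k^α, one has (∑_{j=0}^{N−1} a_j)^α ≥ ∑_{j=0}^{N−1} w^j · a_j^α. -/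
-- monotonicity of x ↦ (x+1)^α - x^α on [0,∞)
lemma aux_mono (α : ℝ) (hα : 1 ≤ α) :
    MonotoneOn (fun x : ℝ => (x + 1) ^ α - x ^ α) (Set.Ici 0) := by
  have hderiv : ∀ x : ℝ, HasDerivAt (fun x : ℝ => (x + 1) ^ α - x ^ α)
      (α * (x + 1) ^ (α - 1) * 1 - α * x ^ (α - 1)) x := by
    intro x
    exact ((Real.hasDerivAt_rpow_const (Or.inr hα)).comp x
      ((hasDerivAt_id x).add_const 1)).sub (Real.hasDerivAt_rpow_const (Or.inr hα))
  apply monotoneOn_of_deriv_nonneg (convex_Ici 0)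
  · exact fun x _ => (hderiv x).continuousAt.continuousWithinAt
  · intro x _
    exact (hderiv x).differentiableAt.differentiableWithinAt
  · intro x hx
    rw [interior_Ici] at hx
    rw [(hderiv x).deriv]
    have h1 : x ^ (α - 1) ≤ (x + 1) ^ (α - 1) :=
      Real.rpow_le_rpow (le_of_lt hx) (by linarith) (by linarith)
    nlinarith [h1, hα]

-- key lemma: (a+s)^α ≥ a^α + w s^α when 0 ≤ s ≤ k a
lemma aux_key (k α : ℝ) (hk0 : 0 < k) (hα : 1 ≤ α) (a s : ℝ) (ha : 0 ≤ a)
    (hs : 0 ≤ s) (hks : s ≤ k * a) :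
    a ^ α + ((1 + k) ^ α - 1) / k ^ α * s ^ α ≤ (a + s) ^ α := by
  rcases eq_or_lt_of_le hs with h0 | hs0
  · simp [← h0, Real.zero_rpow (by linarith : α ≠ 0)]
  · have ha0 : 0 < a := by nlinarith
    have hu : 1 / k ≤ a / s := by
      rw [div_le_div_iff₀ hk0 hs0]; nlinarith
    have hmono := aux_mono α hα (Set.mem_Ici.mpr (by positivity : (0:ℝ) ≤ 1 / k))
      (Set.mem_Ici.mpr (by positivity : (0:ℝ) ≤ a / s)) hu
    simp only at hmono
    have e1 : (1 / k + 1) ^ α = (1 + k) ^ α / k ^ α := by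
      rw [show 1 / k + 1 = (1 + k) / k by field_simp,
        Real.div_rpow (by linarith) hk0.le]
    have e2 : (1 / k) ^ α = 1 / k ^ α := by
      rw [Real.div_rpow zero_le_one hk0.le, Real.one_rpow]
    have e3 : (a / s + 1) ^ α = (a + s) ^ α / s ^ α := by
      rw [show a / s + 1 = (a + s) / s by field_simp,
        Real.div_rpow (by linarith) hs0.le]
    have e4 : (a / s) ^ α = a ^ α / s ^ α := Real.div_rpow ha hs0.le α
    rw [e1, e2, e3, e4, div_sub_div_same, div_sub_div_same] at hmono
    have hspos : 0 < s ^ α := Real.rpow_pos_of_pos hs0 α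
    rw [div_le_div_iff₀ (by positivity) hspos] at hmono
    have hkpos : 0 < k ^ α := Real.rpow_pos_of_pos hk0 α
    rw [div_mul_eq_mul_div, ← le_sub_iff_add_le', div_le_iff₀ hkpos]
    linarith [hmono]

theorem stmt_10 (k α : ℝ) (hk0 : 0 < k) (hk1 : k ≤ 1) (hα : 1 ≤ α)
    (N : ℕ) (hN : 1 ≤ N) (a : ℕ → ℝ)
    (ha0 : ∀ j, j < N → 0 ≤ a j)
    (hdom : ∀ i, i + 1 < N → k * a i ≥ ∑ j ∈ Finset.Ico (i + 1) N, a j) :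
    (∑ j ∈ Finset.range N, a j) ^ α ≥
      ∑ j ∈ Finset.range N, (((1 + k) ^ α - 1) / k ^ α) ^ j * a j ^ α := by
  set w : ℝ := ((1 + k) ^ α - 1) / k ^ α with hw
  have hw0 : 0 ≤ w := by
    have h1 : (1:ℝ) ≤ (1 + k) ^ α := by
      have := Real.rpow_le_rpow zero_le_one (by linarith : (1:ℝ) ≤ 1 + k) (by linarith : 0 ≤ α)
      rwa [Real.one_rpow] at this
    have h2 : (0:ℝ) < k ^ α := Real.rpow_pos_of_pos hk0 α
    rw [hw]
    exact div_nonneg (by linarith) h2.le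
  have key : ∀ n i, N - i = n → i < N →
      ∑ j ∈ Finset.Ico i N, w ^ (j - i) * a j ^ α ≤ (∑ j ∈ Finset.Ico i N, a j) ^ α := by
    intro n
    induction n with
    | zero => intro i h hi; omega
    | succ n ih =>
      intro i h hi
      rcases eq_or_lt_of_le (Nat.succ_le_of_lt hi) with hN1 | hN1
      · -- i + 1 = N : single term
        rw [← hN1, Nat.Ico_succ_singleton, Finset.sum_singleton, Finset.sum_singleton]
        simp
      · -- i + 1 < N
        have hS0 : 0 ≤ ∑ j ∈ Finset.Ico (i + 1) N, a j :=
          Finset.sum_nonneg fun j hj => ha0 j (Finset.mem_Ico.mp hj).2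
        have hIH := ih (i + 1) (by omega) hN1
        have hkey := aux_key k α hk0 hα (a i) (∑ j ∈ Finset.Ico (i + 1) N, a j)
          (ha0 i hi) hS0 (hdom i hN1)
        rw [Finset.sum_eq_sum_Ico_succ_bot hi, Finset.sum_eq_sum_Ico_succ_bot hi]
        simp only [Nat.sub_self, pow_zero, one_mul]
        have hmul : w * (∑ j ∈ Finset.Ico (i + 1) N, w ^ (j - (i + 1)) * a j ^ α)
            ≤ w * (∑ j ∈ Finset.Ico (i + 1) N, a j) ^ α :=
          mul_le_mul_of_nonneg_left hIH hw0
        have hre : ∑ j ∈ Finset.Ico (i + 1) N, w ^ (j - i) * a j ^ α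
            = w * ∑ j ∈ Finset.Ico (i + 1) N, w ^ (j - (i + 1)) * a j ^ α := by
          rw [Finset.mul_sum]
          apply Finset.sum_congr rfl
          intro j hj
          have hj1 : i + 1 ≤ j := (Finset.mem_Ico.mp hj).1
          rw [show j - i = (j - (i + 1)) + 1 by omega, pow_succ]
          ring
        rw [hre]
        calc a i ^ α + w * ∑ j ∈ Finset.Ico (i + 1) N, w ^ (j - (i + 1)) * a j ^ α
            ≤ a i ^ α + w * (∑ j ∈ Finset.Ico (i + 1) N, a j) ^ α := by linarith
          _ ≤ (a i + ∑ j ∈ Finset.Ico (i + 1) N, a j) ^ α := hkey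
  have := key N 0 (by omega) (by omega)
  rw [← Finset.range_eq_Ico] at this
  simpa using this
end

section
/- Let k and α be real numbers with 0 < k ≤ 1 and 0 ≤ α ≤ 1, let N ≥ 1 be a natural number, and let a_0, a_1, …, a_{N−1} be nonnegative real numbers satisfying a_{j+1} ≤ k·a_j for every j = 0, 1, …, N−2. Setting w = ((1+k)^α − 1)/k^α, one has (∑_{j=0}^{N−1} a_j)^α ≤ ∑_{j=0}^{N−1} w^{ω_H(j)} · a_j^α, provided a_0 > 0. -/
/-- The Hamming weight of a natural number: the number of 1's in its binary expansion. -/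
def hammingWeight (j : ℕ) : ℕ := (Nat.digits 2 j).sum

lemma hW_two_mul (j : ℕ) : hammingWeight (2 * j) = hammingWeight j := by
  rcases Nat.eq_zero_or_pos j with rfl | hj
  · rfl
  · unfold hammingWeight
    rw [Nat.digits_def' (by norm_num : 1 < 2) (by omega)]
    simp [Nat.mul_div_cancel_left, Nat.mul_mod_right]

lemma hW_two_mul_add_one (j : ℕ) : hammingWeight (2 * j + 1) = hammingWeight j + 1 := by
  unfold hammingWeight
  rw [Nat.digits_def' (by norm_num : 1 < 2) (by omega)]
  have h1 : (2 * j + 1) % 2 = 1 := by omega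
  have h2 : (2 * j + 1) / 2 = j := by omega
  rw [h1, h2]
  simp [Nat.add_comm]

lemma hW_pos : ∀ j : ℕ, 0 < j → 0 < hammingWeight j := by
  intro j
  induction j using Nat.strong_induction_on with
  | _ j ih =>
    intro hj
    unfold hammingWeight
    rw [Nat.digits_def' (by norm_num : 1 < 2) hj]
    rcases Nat.eq_zero_or_pos (j % 2) with h | h
    · have hj2 : 0 < j / 2 := by omega
      have := ih (j / 2) (by omega) hj2
      unfold hammingWeight at this
      simp only [List.sum_cons]
      omega
    · simp only [List.sum_cons]
      omega

lemma lemC {α : ℝ} (hα0 : 0 ≤ α) (hα1 : α ≤ 1) {u v d : ℝ} (hv : 0 ≤ v) (hvu : v ≤ u)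
    (hd : 0 ≤ d) : (u + d) ^ α + v ^ α ≤ u ^ α + (v + d) ^ α := by
  rcases eq_or_lt_of_le (show v ≤ u + d by linarith) with h | h
  · have hu : u = v := by linarith
    have hd0 : d = 0 := by linarith
    rw [hu, hd0]
    apply le_of_eq
    ring
  · have hden : 0 < u + d - v := by linarith
    set t : ℝ := (u - v) / (u + d - v) with ht
    have ht0 : 0 ≤ t := div_nonneg (by linarith) hden.le
    have ht1 : t ≤ 1 := by
      rw [ht, div_le_one hden]; linarith
    have hcc := Real.concaveOn_rpow hα0 hα1
    have hmemv : v ∈ Set.Ici (0:ℝ) := hv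
    have hmemud : u + d ∈ Set.Ici (0:ℝ) := by simp only [Set.mem_Ici]; linarith
    have ht0' : (0:ℝ) ≤ 1 - t := by linarith
    have hts : t + (1 - t) = 1 := by ring
    have hts' : (1 - t) + t = 1 := by ring
    have htm : t * (u + d - v) = u - v := div_mul_cancel₀ _ hden.ne'
    have h1 : t * (u + d) ^ α + (1 - t) * v ^ α ≤ u ^ α := by
      have h' := hcc.2 hmemud hmemv ht0 ht0' hts
      have harg : t * (u + d) + (1 - t) * v = u := by linear_combination htm
      simpa [smul_eq_mul, harg] using h'
    have h2 : (1 - t) * (u + d) ^ α + t * v ^ α ≤ (v + d) ^ α := by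
      have h' := hcc.2 hmemud hmemv ht0' ht0 hts'
      have harg : (1 - t) * (u + d) + t * v = v + d := by linear_combination -htm
      simpa [smul_eq_mul, harg] using h'
    linarith

lemma lemA {k α : ℝ} (hk0 : 0 < k) (hk1 : k ≤ 1) (hα0 : 0 < α) (hα1 : α ≤ 1)
    {x y : ℝ} (hx : 0 ≤ x) (hy : 0 ≤ y) (hyk : y ≤ k * x) :
    (x + y) ^ α ≤ x ^ α + ((1 + k) ^ α - 1) / k ^ α * y ^ α := by
  rcases eq_or_lt_of_le hy with h | hy0
  · rw [← h]
    simp [Real.zero_rpow hα0.ne']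
  · have hkα : (0:ℝ) < k ^ α := Real.rpow_pos_of_pos hk0 α
    rw [div_mul_eq_mul_div, ← sub_le_iff_le_add', le_div_iff₀ hkα]
    have key := lemC hα0.le hα1 hy (show y ≤ x * k by nlinarith) (mul_nonneg hk0.le hy)
    have e1 : x * k + k * y = (x + y) * k := by ring
    have e2 : y + k * y = (1 + k) * y := by ring
    rw [e1, e2] at key
    have m1 : ((x + y) * k) ^ α = (x + y) ^ α * k ^ α :=
      Real.mul_rpow (by linarith) hk0.le
    have m2 : (x * k) ^ α = x ^ α * k ^ α := Real.mul_rpow hx hk0.le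
    have m3 : ((1 + k) * y) ^ α = (1 + k) ^ α * y ^ α :=
      Real.mul_rpow (by linarith) hy
    rw [m1, m2, m3] at key
    nlinarith [key]

lemma sum_range_two_mul (M : ℕ) (f : ℕ → ℝ) :
    ∑ j ∈ Finset.range (2 * M), f j = ∑ j ∈ Finset.range M, (f (2 * j) + f (2 * j + 1)) := by
  induction M with
  | zero => simp
  | succ M ih =>
    have : 2 * (M + 1) = (2 * M + 1) + 1 := by ring
    rw [this, Finset.sum_range_succ, Finset.sum_range_succ, ih, Finset.sum_range_succ]
    ring

lemma aux (k α : ℝ) (hk0 : 0 < k) (hk1 : k ≤ 1) (hα0 : 0 < α) (hα1 : α ≤ 1) :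
    ∀ N, 1 ≤ N → ∀ a : ℕ → ℝ, (∀ j, 0 ≤ a j) → (∀ j, a (j + 1) ≤ k * a j) →
      (∀ j, N ≤ j → a j = 0) →
      (∑ j ∈ Finset.range N, a j) ^ α ≤
        ∑ j ∈ Finset.range N, (((1 + k) ^ α - 1) / k ^ α) ^ hammingWeight j * a j ^ α := by
  intro N
  induction N using Nat.strong_induction_on with
  | _ N ih =>
    intro hN a ha hdec hz
    set w : ℝ := ((1 + k) ^ α - 1) / k ^ α with hw
    have hw0 : 0 ≤ w := by
      apply div_nonneg
      · have : (1:ℝ) ≤ (1 + k) ^ α := Real.one_le_rpow (by linarith) hα0.le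
        linarith
      · exact (Real.rpow_pos_of_pos hk0 α).le
    rcases eq_or_lt_of_le hN with h1 | h2
    · -- N = 1
      rw [← h1]
      simp [hammingWeight]
    · -- N ≥ 2
      set M : ℕ := (N + 1) / 2 with hM
      have hM1 : 1 ≤ M := by omega
      have hMN : M < N := by omega
      have hN2M : N ≤ 2 * M := by omega
      set b : ℕ → ℝ := fun j => a (2 * j) + a (2 * j + 1) with hb
      have hb0 : ∀ j, 0 ≤ b j := fun j => add_nonneg (ha _) (ha _)
      have hbdec : ∀ j, b (j + 1) ≤ k * b j := by
        intro j
        have d1 := hdec (2 * j)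
        have d2 := hdec (2 * j + 1)
        have d3 := hdec (2 * j + 2)
        have n1 := ha (2 * j)
        have n2 := ha (2 * j + 1)
        have n3 := ha (2 * j + 2)
        have e : 2 * (j + 1) = 2 * j + 2 := by ring
        simp only [hb, e]
        nlinarith [mul_nonneg hk0.le n1, mul_nonneg hk0.le n2]
      have hbz : ∀ j, M ≤ j → b j = 0 := by
        intro j hj
        simp only [hb]
        rw [hz (2 * j) (by omega), hz (2 * j + 1) (by omega)]
        ring
      have IH := ih M hMN hM1 b hb0 hbdec hbz
      have hsum1 : ∑ j ∈ Finset.range N, a j = ∑ j ∈ Finset.range (2 * M), a j := by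
        apply Finset.sum_subset
        · exact Finset.range_subset_range.mpr (by omega)
        · intro j _ hj
          exact hz j (by simp at hj; omega)
      have hsum2 : ∑ j ∈ Finset.range (2 * M), a j = ∑ j ∈ Finset.range M, b j :=
        sum_range_two_mul M a
      rw [hsum1, hsum2]
      refine le_trans IH ?_
      have step : ∑ j ∈ Finset.range M, w ^ hammingWeight j * b j ^ α ≤
          ∑ j ∈ Finset.range (2 * M), w ^ hammingWeight j * a j ^ α := by
        rw [sum_range_two_mul M (fun j => w ^ hammingWeight j * a j ^ α)]
        apply Finset.sum_le_sum
        intro j _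
        have hA := lemA hk0 hk1 hα0 hα1 (ha (2 * j)) (ha (2 * j + 1)) (hdec (2 * j))
        have h1 : w ^ hammingWeight j * b j ^ α ≤
            w ^ hammingWeight j * (a (2 * j) ^ α + w * a (2 * j + 1) ^ α) :=
          mul_le_mul_of_nonneg_left hA (pow_nonneg hw0 _)
        refine le_trans h1 ?_
        rw [hW_two_mul, hW_two_mul_add_one]
        ring_nf
        apply le_of_eq
        ring
      refine le_trans step ?_
      apply le_of_eq
      symm
      apply Finset.sum_subset
      · exact Finset.range_subset_range.mpr (by omega)
      · intro j _ hj
        have : a j = 0 := hz j (by simp at hj; omega)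
        rw [this, Real.zero_rpow hα0.ne']
        ring

theorem stmt_11 (k α : ℝ) (hk0 : 0 < k) (hk1 : k ≤ 1) (hα0 : 0 ≤ α) (hα1 : α ≤ 1)
    (N : ℕ) (hN : 1 ≤ N) (a : ℕ → ℝ)
    (ha0 : ∀ j, j < N → 0 ≤ a j) (ha0pos : 0 < a 0)
    (hdec : ∀ j, j + 1 < N → a (j + 1) ≤ k * a j) :
    (∑ j ∈ Finset.range N, a j) ^ α ≤
      ∑ j ∈ Finset.range N, (((1 + k) ^ α - 1) / k ^ α) ^ hammingWeight j * a j ^ α := by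
  rcases eq_or_lt_of_le hα0 with h0 | hαpos
  · -- α = 0
    rw [← h0]
    rw [Real.rpow_zero]
    have hwz : ((1 + k) ^ (0:ℝ) - 1) / k ^ (0:ℝ) = 0 := by
      rw [Real.rpow_zero, Real.rpow_zero]; norm_num
    rw [hwz]
    have : ∑ j ∈ Finset.range N, (0:ℝ) ^ hammingWeight j * a j ^ (0:ℝ) = 1 := by
      rw [Finset.sum_eq_single_of_mem 0 (Finset.mem_range.mpr (by omega))]
      · simp [hammingWeight]
      · intro j _ hj
        rw [zero_pow (hW_pos j (by omega)).ne']
        ring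
    rw [this]
  · -- α > 0
    set a' : ℕ → ℝ := fun j => if j < N then a j else 0 with ha'
    have h1 : ∀ j, 0 ≤ a' j := by
      intro j; simp only [ha']
      split
      · exact ha0 j (by assumption)
      · exact le_rfl
    have h2 : ∀ j, a' (j + 1) ≤ k * a' j := by
      intro j
      by_cases hj : j + 1 < N
      · have hj' : j < N := by omega
        simp only [ha', if_pos hj, if_pos hj']
        exact hdec j hj
      · simp only [ha', if_neg hj]
        exact mul_nonneg hk0.le (h1 j)
    have h3 : ∀ j, N ≤ j → a' j = 0 := by
      intro j hj
      simp only [ha', if_neg (by omega : ¬ j < N)]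
    have key := aux k α hk0 hk1 hαpos hα1 N hN a' h1 h2 h3
    have e1 : ∑ j ∈ Finset.range N, a' j = ∑ j ∈ Finset.range N, a j := by
      apply Finset.sum_congr rfl
      intro j hj
      simp only [ha', if_pos (Finset.mem_range.mp hj)]
    have e2 : ∑ j ∈ Finset.range N, (((1 + k) ^ α - 1) / k ^ α) ^ hammingWeight j * a' j ^ α =
        ∑ j ∈ Finset.range N, (((1 + k) ^ α - 1) / k ^ α) ^ hammingWeight j * a j ^ α := by
      apply Finset.sum_congr rfl
      intro j hj
      simp only [ha', if_pos (Finset.mem_range.mp hj)]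
    rw [e1, e2] at key
    exact key
end

section
/- Let k and α be real numbers with 0 < k ≤ 1 and 0 ≤ α ≤ 1, let N ≥ 1 be a natural number, and let a_0, a_1, …, a_{N−1} be nonnegative real numbers with a_0 > 0 satisfying k·a_i ≥ ∑_{j=i+1}^{N−1} a_j for every i = 0, 1, …, N−2. Setting w = ((1+k)^α − 1)/k^α, one has (∑_{j=0}^{N−1} a_j)^α ≤ ∑_{j=0}^{N−1} w^j · a_j^α. -/
/-!
With `w = ((1 + k)^α - 1) / k^α`, the one-step inequality `(t + s)^α ≤ t^α + w s^α` holds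
whenever `0 ≤ s ≤ k t`: by concavity of `x ↦ x^α`, the increment `(x + s)^α - x^α` decreases
in `x`, so it is largest at the smallest admissible `x = s / k`, where it equals `w s^α`.
Peeling off `a_i` from the tail sum `a_i + ∑_{j > i} a_j` and applying this step with the
domination hypothesis, a downward induction on `i` gives
`w^i (∑_{j ≥ i} a_j)^α ≤ ∑_{j ≥ i} w^j a_j^α`.
-/

open Finset

theorem ConcaveOn.map_add_sub_map_le_of_le_s12 {𝕜 : Type*} [Field 𝕜] [LinearOrder 𝕜]
    [IsStrictOrderedRing 𝕜] {s : Set 𝕜} {f : 𝕜 → 𝕜} (hf : ConcaveOn 𝕜 s f) {a b d : 𝕜}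
    (ha : a ∈ s) (hbd : b + d ∈ s) (hab : a ≤ b) (hd : 0 ≤ d) :
    f (b + d) - f b ≤ f (a + d) - f a := by
  rcases (sub_nonneg.2 (le_add_of_le_of_nonneg hab hd)).eq_or_lt with hD | hD
  · obtain rfl : a = b := by linarith
    obtain rfl : d = 0 := by linarith
    simp
  -- `a + d` and `b` are mirror-image convex combinations of `a` and `b + d`; add the two
  -- concavity inequalities.
  set t := (b - a) / (b + d - a)
  have ht0 : 0 ≤ t := div_nonneg (by linarith) hD.le
  have ht1 : t ≤ 1 := (div_le_one hD).2 (by linarith)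
  have h₁ := hf.2 ha hbd ht0 (sub_nonneg.2 ht1) (add_sub_cancel t 1)
  have h₂ := hf.2 ha hbd (sub_nonneg.2 ht1) ht0 (sub_add_cancel 1 t)
  have e₁ : t • a + (1 - t) • (b + d) = a + d := by
    simp only [smul_eq_mul, t]; field_simp; ring
  have e₂ : (1 - t) • a + t • (b + d) = b := by
    simp only [smul_eq_mul, t]; field_simp; ring
  rw [e₁, smul_eq_mul, smul_eq_mul] at h₁
  rw [e₂, smul_eq_mul, smul_eq_mul] at h₂
  linarith

theorem Real.rpow_add_le_of_le_mul {k α t s : ℝ} (hk : 0 < k) (hα0 : 0 ≤ α) (hα1 : α ≤ 1)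
    (ht : 0 ≤ t) (hs : 0 ≤ s) (hst : s ≤ k * t) :
    (t + s) ^ α ≤ t ^ α + ((1 + k) ^ α - 1) / k ^ α * s ^ α := by
  have hsk : s / k ≤ t := (div_le_iff₀' hk).2 hst
  have hinc := (Real.concaveOn_rpow hα0 hα1).map_add_sub_map_le_of_le_s12
    (Set.mem_Ici.2 (div_nonneg hs hk.le)) (Set.mem_Ici.2 (add_nonneg ht hs)) hsk hs
  have hscale : (s / k + s) ^ α = s ^ α * (1 + k) ^ α / k ^ α := by
    rw [show s / k + s = s * (1 + k) / k by field_simp,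
      Real.div_rpow (by positivity) hk.le, Real.mul_rpow hs (by positivity)]
  simp only [hscale, Real.div_rpow hs hk.le] at hinc
  calc (t + s) ^ α ≤ t ^ α + (s ^ α * (1 + k) ^ α / k ^ α - s ^ α / k ^ α) := by linarith
    _ = _ := by field_simp

theorem pow_mul_rpow_sum_Ico_le {k α : ℝ} (hk : 0 < k) (hα0 : 0 ≤ α) (hα1 : α ≤ 1)
    {M : ℕ} {a : ℕ → ℝ} (ha : ∀ j, j < M + 1 → 0 ≤ a j)
    (hdom : ∀ i, i + 1 < M + 1 → k * a i ≥ ∑ j ∈ Ico (i + 1) (M + 1), a j)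
    {i : ℕ} (hi : i ≤ M) :
    (((1 + k) ^ α - 1) / k ^ α) ^ i * (∑ j ∈ Ico i (M + 1), a j) ^ α ≤
      ∑ j ∈ Ico i (M + 1), (((1 + k) ^ α - 1) / k ^ α) ^ j * a j ^ α := by
  set w := ((1 + k) ^ α - 1) / k ^ α
  have hw : 0 ≤ w :=
    div_nonneg (sub_nonneg.2 (Real.one_le_rpow (by linarith) hα0)) (Real.rpow_nonneg hk.le α)
  induction hi using Nat.decreasingInduction with
  | self => simp
  | of_succ i hiM ih =>
    have hiM' : i < M + 1 := by omega
    rw [sum_eq_sum_Ico_succ_bot hiM', sum_eq_sum_Ico_succ_bot hiM']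
    have hstep := Real.rpow_add_le_of_le_mul hk hα0 hα1 (ha i hiM')
      (sum_nonneg fun j hj => ha j (mem_Ico.1 hj).2) (hdom i (by omega))
    calc w ^ i * (a i + ∑ j ∈ Ico (i + 1) (M + 1), a j) ^ α
        ≤ w ^ i * (a i ^ α + w * (∑ j ∈ Ico (i + 1) (M + 1), a j) ^ α) :=
          mul_le_mul_of_nonneg_left hstep (pow_nonneg hw i)
      _ = w ^ i * a i ^ α + w ^ (i + 1) * (∑ j ∈ Ico (i + 1) (M + 1), a j) ^ α := by ring
      _ ≤ _ := by gcongr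

theorem stmt_12_general (k α : ℝ) (hk0 : 0 < k) (hα0 : 0 ≤ α) (hα1 : α ≤ 1)
    (N : ℕ) (hN : 1 ≤ N) (a : ℕ → ℝ)
    (ha0 : ∀ j, j < N → 0 ≤ a j)
    (hdom : ∀ i, i + 1 < N → k * a i ≥ ∑ j ∈ Finset.Ico (i + 1) N, a j) :
    (∑ j ∈ Finset.range N, a j) ^ α ≤
      ∑ j ∈ Finset.range N, (((1 + k) ^ α - 1) / k ^ α) ^ j * a j ^ α := by
  obtain ⟨M, rfl⟩ := Nat.exists_eq_add_of_le' hN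
  have h := pow_mul_rpow_sum_Ico_le hk0 hα0 hα1 ha0 hdom (Nat.zero_le M)
  rwa [pow_zero, one_mul, ← range_eq_Ico] at h

theorem stmt_12 (k α : ℝ) (hk0 : 0 < k) (hk1 : k ≤ 1) (hα0 : 0 ≤ α) (hα1 : α ≤ 1)
    (N : ℕ) (hN : 1 ≤ N) (a : ℕ → ℝ)
    (ha0 : ∀ j, j < N → 0 ≤ a j) (ha0pos : 0 < a 0)
    (hdom : ∀ i, i + 1 < N → k * a i ≥ ∑ j ∈ Finset.Ico (i + 1) N, a j) :
    (∑ j ∈ Finset.range N, a j) ^ α ≤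
      ∑ j ∈ Finset.range N, (((1 + k) ^ α - 1) / k ^ α) ^ j * a j ^ α :=
  stmt_12_general k α hk0 hα0 hα1 N hN a ha0 hdom
end
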